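/- For any weak composition α, the filled-up diagram D(α)-bar, defined as the union over cells (r,c) ∈ D(α) of the column segments [r] × {c}, equals the union over dark clouds (r,c) ∈ dark(α) of the full rectangles [r] × [c]. -/

import Mathlib

open scoped Classical

noncomputable section

/-- A weak composition: a finitely supported sequence of naturals.  Indices are
thought of as positive integers; index `0` is required to satisfy `α 0 = 0`. -/
abbrev WeakComp := ℕ →₀ ℕ

/-- A weak composition is snowy if its positive entries are pairwise distinct. -/
def Snowy (α : WeakComp) : Prop :=
  ∀ r r', 0 < α r → α r = α r' → r = r'

/-- The key diagram of a weak composition: the left-justified diagram with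
`α r` cells in row `r` (columns `1, …, α r`). -/
def keyDiagram (α : WeakComp) : Finset (ℕ × ℕ) :=
  α.support.biUnion fun r => (Finset.Icc 1 (α r)).image fun c => (r, c)

/-- Largest row index occurring in a diagram. -/
def rowBound (D : Finset (ℕ × ℕ)) : ℕ := (D.image Prod.fst).sup id

/-- One step of the snow-diagram algorithm: in row `r`, mark as a dark cloud the
rightmost cell of `D` whose column contains no dark cloud of `S` yet. -/
def darkStep (D S : Finset (ℕ × ℕ)) (r : ℕ) : Finset (ℕ × ℕ) :=
  let cols := (D.filter fun p => p.1 = r ∧ ∀ q ∈ S, q.2 ≠ p.2).image Prod.snd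
  if h : cols.Nonempty then insert (r, cols.max' h) S else S

/-- Process rows `N, N-1, …, N-k+1` from bottom to top. -/
def darkAux (D : Finset (ℕ × ℕ)) (N : ℕ) : ℕ → Finset (ℕ × ℕ)
  | 0 => ∅
  | k + 1 => darkStep D (darkAux D N k) (N - k)

/-- The dark cloud diagram of a diagram `D`: iterate the rows of `D` from bottom
to top, marking in each row the rightmost cell whose column contains no dark
cloud from a lower row. -/
def dark (D : Finset (ℕ × ℕ)) : Finset (ℕ × ℕ) := darkAux D (rowBound D) (rowBound D)

/-- The underlying diagram of the snow diagram of `D`: the cells of `D` together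
with all (snowflake) positions above a dark cloud in its column. -/
def snow (D : Finset (ℕ × ℕ)) : Finset (ℕ × ℕ) :=
  D ∪ (dark D).biUnion fun p => (Finset.Icc 1 p.1).image fun r => (r, p.2)

/-- `rajcode` of a diagram: the number of cells in row `r` of its snow diagram. -/
def rajcodeD (D : Finset (ℕ × ℕ)) (r : ℕ) : ℕ :=
  ((snow D).filter fun p => p.1 = r).card

/-- `raj` of a diagram: the total number of cells of its snow diagram. -/
def rajD (D : Finset (ℕ × ℕ)) : ℕ := (snow D).card

/-- `rajcode` of a weak composition. -/
def rajcode (α : WeakComp) (r : ℕ) : ℕ := rajcodeD (keyDiagram α) r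

/-- `raj` of a weak composition. -/
def raj (α : WeakComp) : ℕ := rajD (keyDiagram α)

/-- Non-attacking rook diagram: a finite subset of `ℤ_{>0} × ℤ_{>0}` with at
most one cell in each row and at most one cell in each column. -/
def IsRook (R : Finset (ℕ × ℕ)) : Prop :=
  (∀ p ∈ R, 1 ≤ p.1 ∧ 1 ≤ p.2) ∧
    ∀ p ∈ R, ∀ q ∈ R, (p.1 = q.1 ∨ p.2 = q.2) → p = q

/-- The sum `|α|` of the entries of a weak composition. -/
def wsum (α : WeakComp) : ℕ := α.sum fun _ v => v

/-- The number of pairs `(r, r')` with `1 ≤ r < r'` and `α r < α r'`. -/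
def invCount (α : WeakComp) : ℕ :=
  ((Finset.Icc 1 (α.support.sup id) ×ˢ α.support).filter fun p =>
      p.1 < p.2 ∧ α p.1 < α p.2).card

/-- Swap entries `i` and `i+1` of a weak composition. -/
def swapEntries (i : ℕ) (α : WeakComp) : WeakComp :=
  Finsupp.equivMapDomain (Equiv.swap i (i + 1)) α

/-- The Rothe diagram of `w ∈ S_n`, in 1-based coordinates:
`{(r, w(r')) : r < r', w(r) > w(r')}`. -/
def rothe {n : ℕ} (w : Equiv.Perm (Fin n)) : Finset (ℕ × ℕ) :=
  (Finset.univ.filter fun p : Fin n × Fin n => p.1 < p.2 ∧ w p.2 < w p.1).image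
    fun p => ((p.1 : ℕ) + 1, (w p.2 : ℕ) + 1)

/-- Length of the longest increasing subsequence of `w` starting at position `r`
(equivalently, starting with the value `w r`). -/
def LISfrom {n : ℕ} (w : Equiv.Perm (Fin n)) (r : Fin n) : ℕ :=
  Finset.sup (Finset.univ.filter fun s : Finset (Fin n) =>
      r ∈ s ∧ (∀ i ∈ s, r ≤ i) ∧ ∀ i ∈ s, ∀ j ∈ s, i < j → w i < w j)
    Finset.card

/-- Insert `x` into a strictly decreasing row: replace the largest entry `< x`
(returning it as bumped), or append `x` at the end. -/
def insertRow : List ℕ → ℕ → List ℕ × Option ℕ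
  | [], x => ([x], none)
  | a :: t, x =>
      if a < x then (x :: t, some a)
      else (a :: (insertRow t x).1, (insertRow t x).2)

/-- The 1-based value of `w` at 0-based position `i` (0 if out of range). -/
def oneline {n : ℕ} (w : Equiv.Perm (Fin n)) (i : ℕ) : ℕ :=
  if h : i < n then (w ⟨i, h⟩ : ℕ) + 1 else 0

/-- Row one of the Schensted insertion tableau after the first `k` insertions of
the values `w(n), w(n-1), …` (1-based values, inserted from the last position). -/
def rowOneAux {n : ℕ} (w : Equiv.Perm (Fin n)) : ℕ → List ℕ
  | 0 => []
  | k + 1 => (insertRow (rowOneAux w k) (oneline w (n - 1 - k))).1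

/-- The value bumped from row one when the value `w r` is inserted (during the
Schensted insertion of `w(n), …, w(1)` into the empty tableau); `none` if `w r`
is appended at the end of row one. -/
def bumpedFromRowOne {n : ℕ} (w : Equiv.Perm (Fin n)) (r : Fin n) : Option ℕ :=
  (insertRow (rowOneAux w (n - 1 - (r : ℕ))) (oneline w (r : ℕ))).2

/-- Position `i` starts a maximal decreasing run of `u` (in one-line notation). -/
def IsRunStart {n : ℕ} (u : Equiv.Perm (Fin n)) (i : Fin n) : Prop :=
  ∀ j : Fin n, (j : ℕ) + 1 = (i : ℕ) → u j < u i

/-- A fireworks permutation: the initial elements of its maximal decreasing runs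
are increasing. -/
def Fireworks {n : ℕ} (u : Equiv.Perm (Fin n)) : Prop :=
  ∀ i j : Fin n, IsRunStart u i → IsRunStart u j → i < j → u i < u j

/-- An inverse fireworks permutation. -/
def InverseFireworks {n : ℕ} (w : Equiv.Perm (Fin n)) : Prop := Fireworks w⁻¹

/-- The `n`-th Bell number: the number of set partitions (equivalence relations)
of an `n`-element set. -/
def bell (n : ℕ) : ℕ := Nat.card (Setoid (Fin n))

/-- The staircase board `Stair_n = {(r,c) : 1 ≤ r ≤ n-1, 1 ≤ c ≤ n-r}`. -/
def stair (n : ℕ) : Finset (ℕ × ℕ) :=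
  (Finset.Icc 1 n ×ˢ Finset.Icc 1 n).filter fun p => p.1 ≤ n - 1 ∧ p.2 ≤ n - p.1

/-- All cells weakly above a rook of `R` in its column, or weakly to the left of
a rook of `R` in its row. -/
def hooks (R : Finset (ℕ × ℕ)) : Finset (ℕ × ℕ) :=
  R.biUnion fun p =>
    ((Finset.Icc 1 p.1).image fun r => (r, p.2)) ∪
      ((Finset.Icc 1 p.2).image fun c => (p.1, c))

/-- The Northwest number `NW(R)`. -/
def NW (R : Finset (ℕ × ℕ)) : ℕ := (hooks R).card

/-- The Garsia–Remmel statistic: the number of cells of `Stair_n` that are not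
weakly above a rook in its column and not weakly to the left of a rook in its
row. -/
def GRcount (n : ℕ) (R : Finset (ℕ × ℕ)) : ℕ :=
  ((stair n).filter fun q =>
      ¬ ∃ p ∈ R, (p.2 = q.2 ∧ q.1 ≤ p.1) ∨ (p.1 = q.1 ∧ q.2 ≤ p.2)).card

/-- Garsia–Remmel `q`-Stirling numbers of the second kind. -/
def qStirling : ℕ → ℕ → Polynomial ℤ
  | 0, 0 => 1
  | 0, _ + 1 => 0
  | _ + 1, 0 => 0
  | n + 1, k + 1 =>
      Polynomial.X ^ k * qStirling n k +
        (∑ i ∈ Finset.range (k + 1), Polynomial.X ^ i) * qStirling n (k + 1)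

/-- The `q`-Bell polynomial `B_n(q) = Σ_{k=0}^n S_{n,k}(q)`. -/
def qBell (n : ℕ) : Polynomial ℤ := ∑ k ∈ Finset.range (n + 1), qStirling n k

/-- Tail lexicographic order on exponent vectors: `γ < α` iff there is `k` with
`γ k < α k` and `γ j = α j` for all `j > k`. -/
def TailLt (γ α : ℕ →₀ ℕ) : Prop :=
  ∃ k, γ k < α k ∧ ∀ j, k < j → γ j = α j


/-! Every cell `(r, c)` of a diagram lies weakly above and to the left of some dark cloud: when
row `r` is processed, either column `c` already holds a cloud from a lower row, or the cloud
placed in row `r` sits in a column `≥ c`. Conversely, in a left-justified diagram the rectangle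
`[r] × [c]` of a dark cloud `(r, c)` is the union of the column bars of the cells in row `r`. -/

section DarkClouds

variable {D : Finset (ℕ × ℕ)}

lemma subset_darkStep (S : Finset (ℕ × ℕ)) (r : ℕ) : S ⊆ darkStep D S r := by
  unfold darkStep
  dsimp only
  split
  · exact Finset.subset_insert _ _
  · exact Finset.Subset.rfl

lemma mem_darkStep {S : Finset (ℕ × ℕ)} {r : ℕ} {q : ℕ × ℕ} (hq : q ∈ darkStep D S r) :
    q ∈ S ∨ q ∈ D ∧ q.1 = r := by
  unfold darkStep at hq
  dsimp only at hq
  split at hq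
  · rename_i hcols
    obtain rfl | hqS := Finset.mem_insert.1 hq
    · obtain ⟨p, hp, hpc⟩ := Finset.mem_image.1 (Finset.max'_mem _ hcols)
      simp only [Finset.mem_filter] at hp
      obtain ⟨hpD, hpr, -⟩ := hp
      right
      rw [← hpc, ← hpr]
      exact ⟨hpD, rfl⟩
    · exact Or.inl hqS
  · exact Or.inl hq

lemma exists_mem_darkStep_of_free_column {S : Finset (ℕ × ℕ)} {r c : ℕ} (hrc : (r, c) ∈ D)
    (hfree : ∀ q ∈ S, q.2 ≠ c) : ∃ q ∈ darkStep D S r, q.1 = r ∧ c ≤ q.2 := by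
  unfold darkStep
  dsimp only
  have hc : c ∈ (D.filter fun p => p.1 = r ∧ ∀ q ∈ S, q.2 ≠ p.2).image Prod.snd := by
    simp only [Finset.mem_image, Finset.mem_filter]
    exact ⟨(r, c), ⟨hrc, rfl, hfree⟩, rfl⟩
  rw [dif_pos ⟨c, hc⟩]
  exact ⟨_, Finset.mem_insert_self _ _, rfl, Finset.le_max' _ c hc⟩

lemma monotone_darkAux (N : ℕ) : Monotone (darkAux D N) :=
  monotone_nat_of_le_succ fun k => subset_darkStep (darkAux D N k) (N - k)

lemma mem_darkAux {N k : ℕ} {q : ℕ × ℕ} (hq : q ∈ darkAux D N k) :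
    q ∈ D ∧ N + 1 - k ≤ q.1 := by
  induction k with
  | zero => simp [darkAux] at hq
  | succ k ih =>
    rcases mem_darkStep hq with hq | ⟨hqD, hqr⟩
    · exact ⟨(ih hq).1, by have := (ih hq).2; omega⟩
    · exact ⟨hqD, by omega⟩

lemma dark_subset (D : Finset (ℕ × ℕ)) : dark D ⊆ D :=
  fun _ hq => (mem_darkAux hq).1

lemma exists_mem_darkAux_succ {N k c : ℕ} (hc : (N - k, c) ∈ D) :
    ∃ q ∈ darkAux D N (k + 1), N - k ≤ q.1 ∧ c ≤ q.2 := by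
  by_cases htaken : ∃ q ∈ darkAux D N k, q.2 = c
  · obtain ⟨q, hq, rfl⟩ := htaken
    exact ⟨q, monotone_darkAux N k.le_succ hq, by have := (mem_darkAux hq).2; omega, le_rfl⟩
  · push Not at htaken
    obtain ⟨q, hq, hqr, hcq⟩ := exists_mem_darkStep_of_free_column hc htaken
    exact ⟨q, hq, hqr.ge, hcq⟩

lemma exists_mem_dark_le {r c : ℕ} (hrc : (r, c) ∈ D) (hr : 1 ≤ r) :
    ∃ q ∈ dark D, r ≤ q.1 ∧ c ≤ q.2 := by
  have hrN : r ≤ rowBound D := Finset.le_sup (f := id) (Finset.mem_image_of_mem Prod.fst hrc)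
  have hrow : rowBound D - (rowBound D - r) = r := Nat.sub_sub_self hrN
  obtain ⟨q, hq, hrq, hcq⟩ := exists_mem_darkAux_succ (N := rowBound D) (hrow.symm ▸ hrc)
  exact ⟨q, monotone_darkAux _ (by omega) hq, hrow ▸ hrq, hcq⟩

end DarkClouds

def IsLeftJustified (D : Finset (ℕ × ℕ)) : Prop :=
  ∀ r c, (r, c) ∈ D → 1 ≤ c ∧ ∀ c', 1 ≤ c' → c' ≤ c → (r, c') ∈ D

lemma isLeftJustified_keyDiagram (α : WeakComp) : IsLeftJustified (keyDiagram α) := by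
  have mem : ∀ r c, (r, c) ∈ keyDiagram α ↔ 1 ≤ c ∧ c ≤ α r := by
    intro r c
    simp only [keyDiagram, Finset.mem_biUnion, Finset.mem_image, Finset.mem_Icc,
      Finsupp.mem_support_iff, Prod.mk.injEq]
    constructor
    · rintro ⟨r, -, c, hc, rfl, rfl⟩
      exact hc
    · intro hc
      exact ⟨r, by omega, c, hc, rfl, rfl⟩
  intro r c hrc
  rw [mem] at hrc
  exact ⟨hrc.1, fun c' hc' hc'c => (mem r c').2 ⟨hc', hc'c.trans hrc.2⟩⟩

lemma IsLeftJustified.biUnion_columns_eq_biUnion_dark_rectangles {D : Finset (ℕ × ℕ)}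
    (hD : IsLeftJustified D) :
    (D.biUnion fun p => (Finset.Icc 1 p.1).image fun r => (r, p.2)) =
      (dark D).biUnion fun p => Finset.Icc 1 p.1 ×ˢ Finset.Icc 1 p.2 := by
  ext ⟨x, y⟩
  simp only [Finset.mem_biUnion, Finset.mem_image, Finset.mem_Icc, Finset.mem_product,
    Prod.exists, Prod.mk.injEq]
  constructor
  · rintro ⟨r, c, hrc, x, ⟨hx1, hxr⟩, rfl, rfl⟩
    obtain ⟨q, hq, hrq, hcq⟩ := exists_mem_dark_le hrc (hx1.trans hxr)
    exact ⟨q.1, q.2, hq, ⟨hx1, hxr.trans hrq⟩, (hD r c hrc).1, hcq⟩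
  · rintro ⟨r, c, hq, hx, hy1, hyc⟩
    exact ⟨r, y, (hD r c (dark_subset D hq)).2 y hy1 hyc, x, hx, rfl, rfl⟩

theorem keyDiagram_bar_eq_biUnion_rectangles_general (α : WeakComp) :
    ((keyDiagram α).biUnion fun p => (Finset.Icc 1 p.1).image fun r => (r, p.2)) =
      (dark (keyDiagram α)).biUnion fun p => Finset.Icc 1 p.1 ×ˢ Finset.Icc 1 p.2 :=
  (isLeftJustified_keyDiagram α).biUnion_columns_eq_biUnion_dark_rectangles

/-- `D(α)`-bar (cells above cells of `D(α)`) equals the union of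
the rectangles `[r] × [c]` over dark clouds `(r,c)`. -/
theorem keyDiagram_bar_eq_biUnion_rectangles (α : WeakComp) (h0 : α 0 = 0) :
    ((keyDiagram α).biUnion fun p => (Finset.Icc 1 p.1).image fun r => (r, p.2)) =
      (dark (keyDiagram α)).biUnion fun p => Finset.Icc 1 p.1 ×ˢ Finset.Icc 1 p.2 :=
  keyDiagram_bar_eq_biUnion_rectangles_general α

end
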